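/- Let H be a real Hilbert space, let Γ : H → ℝ^s be a continuous linear map, let Ů := ker Γ, and let (φ_i)_{i≥1} be a complete system in H. Set Ů^(N) := span{φ₁,…,φ_N} ∩ Ů. Let J : H → ℝ be continuous, strictly convex on Ů (i.e. J(t·u + (1−t)·v) < t·J(u) + (1−t)·J(v) for all distinct u, v ∈ Ů and t ∈ (0,1)), convex on H, and growing at infinity on Ů. Then J has a unique minimizer ū on Ů and a unique minimizer u^(N) on each Ů^(N), the whole sequence u^(N) converges weakly to ū (⟨u^(N), v⟩ → ⟨ū, v⟩ for every v ∈ H), and J(u^(N)) → J(ū). -/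

import Mathlib

/-!
The Ritz minimizers `u⁽ᴺ⁾` exist by compactness in finite dimension and are bounded by the growth
condition, so, `H` being separable, they have weakly convergent subsequences. A continuous convex
functional is weakly lower semicontinuous (its sublevel sets are closed and convex, hence weakly
closed), and `J (u⁽ᴺ⁾)` decreases to `inf_Ů J` because `⋃ Ů⁽ᴺ⁾` is dense in `Ů`; hence every weak
cluster point of `(u⁽ᴺ⁾)` minimizes `J` on `Ů`. Strict convexity makes this minimizer unique, so
the whole sequence converges weakly to it.

`⋃ Ů⁽ᴺ⁾` is dense in `Ů = ker Γ` because `Γ` has finite-dimensional range: a continuous projection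
onto `ker Γ` along a finite-dimensional subspace of `span {φᵢ}` maps that span into `⋃ Ů⁽ᴺ⁾`.
-/

open Set Filter Topology
open scoped RealInnerProductSpace

section Density

variable {𝕜 E F : Type*} [NontriviallyNormedField 𝕜] [CompleteSpace 𝕜]
  [NormedAddCommGroup E] [NormedSpace 𝕜 E] [NormedAddCommGroup F] [NormedSpace 𝕜 F]
  [FiniteDimensional 𝕜 F]

theorem Submodule.ker_subset_closure_inf_ker {D : Submodule 𝕜 E} (hD : Dense (D : Set E))
    (Γ : E →L[𝕜] F) :
    (LinearMap.ker (Γ : E →ₗ[𝕜] F) : Set E) ⊆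
      closure (D ⊓ LinearMap.ker (Γ : E →ₗ[𝕜] F) : Submodule 𝕜 E) := by
  let ΓD : D →ₗ[𝕜] F := (Γ : E →ₗ[𝕜] F) ∘ₗ D.subtype
  have hrange : ∀ x, Γ x ∈ LinearMap.range ΓD := by
    suffices closure (D : Set E) ⊆ Γ ⁻¹' LinearMap.range ΓD from fun x => this (hD x)
    refine closure_minimal (fun x hx => ⟨⟨x, hx⟩, rfl⟩) ?_
    exact (Submodule.closed_of_finiteDimensional _).preimage Γ.continuous
  obtain ⟨σ, hσ⟩ := ΓD.rangeRestrict.exists_rightInverse_of_surjective ΓD.range_rangeRestrict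
  let ρ : E →ₗ[𝕜] LinearMap.range ΓD := LinearMap.codRestrict _ (Γ : E →ₗ[𝕜] F) hrange
  -- `Q` projects onto `ker Γ` along a finite-dimensional subspace of `D`
  let Q : E →ₗ[𝕜] E := LinearMap.id - D.subtype ∘ₗ σ ∘ₗ ρ
  have hΓσ : ∀ y, Γ (σ y) = y := fun y => congrArg Subtype.val (LinearMap.congr_fun hσ y)
  have hQcont : Continuous Q :=
    continuous_id.sub <| continuous_subtype_val.comp <|
      σ.continuous_of_finiteDimensional.comp <| Γ.continuous.subtype_mk _
  have hQker : ∀ x, Γ (Q x) = 0 := fun x => by simp [Q, ρ, hΓσ]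
  intro u hu
  have hQu : Q u = u := by
    have : ρ u = 0 := Subtype.ext hu
    simp [Q, this]
  rw [← hQu]
  refine map_mem_closure hQcont (hD u) fun x hx => ⟨?_, hQker x⟩
  exact D.sub_mem hx (σ (ρ x)).2

theorem Submodule.ker_subset_closure_iUnion_inf_ker {ι : Type*} [Nonempty ι]
    {V : ι → Submodule 𝕜 E} (hV : Directed (· ≤ ·) V)
    (hdense : Dense ((⨆ i, V i : Submodule 𝕜 E) : Set E))
    (Γ : E →L[𝕜] F) :
    (LinearMap.ker (Γ : E →ₗ[𝕜] F) : Set E) ⊆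
      closure (⋃ i, (V i ⊓ LinearMap.ker (Γ : E →ₗ[𝕜] F) : Submodule 𝕜 E)) := by
  refine (ker_subset_closure_inf_ker hdense Γ).trans (closure_mono ?_)
  rintro x ⟨hxV, hxΓ⟩
  obtain ⟨i, hi⟩ := (mem_iSup_of_directed V hV).1 hxV
  exact mem_iUnion.2 ⟨i, hi, hxΓ⟩

end Density

theorem TopologicalSpace.SeparableSpace.of_dense_span {E : Type*} [AddCommMonoid E] [Module ℝ E]
    [TopologicalSpace E] [ContinuousAdd E] [ContinuousSMul ℝ E] {s : Set E} (hs : s.Countable)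
    (hd : Dense (Submodule.span ℝ s : Set E)) : SeparableSpace E := by
  rw [← isSeparable_univ_iff, ← hd.closure_eq]
  exact hs.isSeparable.span.closure

section Weak

variable {H : Type*} [NormedAddCommGroup H] [InnerProductSpace ℝ H]

def WeakTendsto {ι : Type*} (u : ι → H) (l : Filter ι) (w : H) : Prop :=
  ∀ v, Tendsto (fun i => ⟪u i, v⟫) l (𝓝 ⟪w, v⟫)

variable [CompleteSpace H]

theorem exists_weakTendsto_subseq [TopologicalSpace.SeparableSpace H] {u : ℕ → H} {C : ℝ}
    (hu : ∀ n, ‖u n‖ ≤ C) : ∃ w, ∃ ψ : ℕ → ℕ, StrictMono ψ ∧ WeakTendsto (u ∘ ψ) atTop w := by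
  let f : ℕ → WeakDual ℝ H := fun n => StrongDual.toWeakDual (InnerProductSpace.toDual ℝ H (u n))
  obtain ⟨g, -, ψ, hψ, hg⟩ := WeakDual.isSeqCompact_closedBall ℝ H 0 C
    (x := f) fun n => by simpa [f] using hu n
  refine ⟨(InnerProductSpace.toDual ℝ H).symm (WeakDual.toStrongDual g), ψ, hψ, fun v => ?_⟩
  rw [InnerProductSpace.toDual_symm_apply]
  exact tendsto_iff_forall_eval_tendsto_topDualPairing.1 hg v

theorem WeakTendsto.mem_of_isClosed_of_convex {ι : Type*} {l : Filter ι} [l.NeBot] {u : ι → H}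
    {w : H} (hw : WeakTendsto u l w) {s : Set H} (hsc : IsClosed s) (hs : Convex ℝ s)
    (hu : ∀ᶠ i in l, u i ∈ s) : w ∈ s := by
  by_contra hws
  obtain ⟨f, t, hfs, htf⟩ := geometric_hahn_banach_closed_point hs hsc hws
  have hf : Tendsto (fun i => f (u i)) l (𝓝 (f w)) := by
    simpa [← InnerProductSpace.toDual_symm_apply, real_inner_comm] using
      hw ((InnerProductSpace.toDual ℝ H).symm f)
  exact (le_of_tendsto hf (hu.mono fun i hi => (hfs _ hi).le)).not_gt htf

theorem WeakTendsto.le_of_convexOn {ι : Type*} {l : Filter ι} [l.NeBot] {u : ι → H}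
    {w : H} (hw : WeakTendsto u l w) {J : H → ℝ} (hJ : ConvexOn ℝ univ J)
    (hJc : LowerSemicontinuous J) {c : ℝ} (hc : ∀ᶠ i in l, J (u i) ≤ c) : J w ≤ c := by
  exact hw.mem_of_isClosed_of_convex (s := {x | J x ≤ c}) (hJc.isClosed_preimage c)
    (by simpa using hJ.convex_le c) hc

end Weak

section Ritz

variable {H : Type*} [NormedAddCommGroup H] [InnerProductSpace ℝ H]
  {J : H → ℝ} {U : Submodule ℝ H} {V : ℕ → Submodule ℝ H} {u : ℕ → H}

theorem Submodule.exists_isMinOn_of_finiteDimensional (hJ : Continuous J) (S : Submodule ℝ H)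
    [FiniteDimensional ℝ S] {R : ℝ} (hR : ∀ x ∈ S, R ≤ ‖x‖ → J 0 ≤ J x) :
    ∃ x ∈ S, IsMinOn J S x := by
  obtain ⟨x, hx⟩ := (hJ.comp continuous_subtype_val).exists_forall_le' (0 : S)
    ((tendsto_norm_cocompact_atTop.eventually_ge_atTop R).mono fun y hy => hR y y.2 hy)
  exact ⟨x, x.2, fun y hy => hx ⟨y, hy⟩⟩

structure IsRitzSequence (J : H → ℝ) (U : Submodule ℝ H) (V : ℕ → Submodule ℝ H) (u : ℕ → H) :
    Prop where
  mono : Monotone V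
  le : ∀ N, V N ≤ U
  dense : (U : Set H) ⊆ closure (⋃ N, (V N : Set H))
  mem : ∀ N, u N ∈ V N
  isMinOn : ∀ N, IsMinOn J (V N) (u N)

namespace IsRitzSequence

theorem antitone (hu : IsRitzSequence J U V u) : Antitone (J ∘ u) :=
  fun _ _ hNM => hu.isMinOn _ (hu.mono hNM (hu.mem _))

theorem exists_lt (hu : IsRitzSequence J U V u) (hJ : Continuous J) {v : H} (hv : v ∈ U)
    {c : ℝ} (hc : J v < c) : ∃ N, J (u N) < c := by
  obtain ⟨x, hxc, hxV⟩ := mem_closure_iff.1 (hu.dense hv) _ (isOpen_lt hJ continuous_const) hc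
  obtain ⟨N, hN⟩ := mem_iUnion.1 hxV
  exact ⟨N, (hu.isMinOn N hN).trans_lt hxc⟩

theorem norm_le (hu : IsRitzSequence J U V u) {R : ℝ} (hR : ∀ x ∈ U, R ≤ ‖x‖ → J 0 < J x)
    (N : ℕ) : ‖u N‖ ≤ R := by
  by_contra! h
  linarith [hR _ (hu.le N (hu.mem N)) h.le, isMinOn_iff.1 (hu.isMinOn N) 0 (V N).zero_mem]

theorem tendsto_apply (hu : IsRitzSequence J U V u) (hJ : Continuous J) {w : H} (hwU : w ∈ U)
    (hw : IsMinOn J U w) : Tendsto (J ∘ u) atTop (𝓝 (J w)) := by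
  refine tendsto_order.2 ⟨fun a ha => .of_forall fun N => ha.trans_le (hw (hu.le N (hu.mem N))),
    fun c hc => ?_⟩
  obtain ⟨N, hN⟩ := hu.exists_lt hJ hwU hc
  exact eventually_atTop.2 ⟨N, fun n hn => (hu.antitone hn).trans_lt hN⟩

variable [CompleteSpace H]

theorem isMinOn_of_weakTendsto (hu : IsRitzSequence J U V u) (hJ : Continuous J)
    (hconv : ConvexOn ℝ univ J) (hU : IsClosed (U : Set H)) {ψ : ℕ → ℕ}
    (hψ : Tendsto ψ atTop atTop) {w : H} (hw : WeakTendsto (u ∘ ψ) atTop w) :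
    w ∈ U ∧ IsMinOn J U w := by
  have hwU : w ∈ U :=
    hw.mem_of_isClosed_of_convex hU U.convex (.of_forall fun n => hu.le _ (hu.mem _))
  have hwle : ∀ N, J w ≤ J (u N) := fun N =>
    hw.le_of_convexOn hconv hJ.lowerSemicontinuous <|
      (hψ.eventually_ge_atTop N).mono fun n hn => hu.antitone hn
  refine ⟨hwU, isMinOn_iff.2 fun v hv => le_of_forall_gt fun c hc => ?_⟩
  obtain ⟨N, hN⟩ := hu.exists_lt hJ hv hc
  exact (hwle N).trans_lt hN

theorem weakTendsto [TopologicalSpace.SeparableSpace H] (hu : IsRitzSequence J U V u)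
    (hJ : Continuous J) (hconv : ConvexOn ℝ univ J) (hU : IsClosed (U : Set H))
    (hstrict : StrictConvexOn ℝ U J)
    {R : ℝ} (hR : ∀ N, ‖u N‖ ≤ R) {w : H} (hwU : w ∈ U) (hw : IsMinOn J U w) :
    WeakTendsto u atTop w := by
  intro v
  refine tendsto_of_subseq_tendsto fun ns hns => ?_
  obtain ⟨w', ψ, hψ, hw'⟩ := exists_weakTendsto_subseq (u := u ∘ ns) fun n => hR _
  obtain ⟨hw'U, hw'min⟩ := hu.isMinOn_of_weakTendsto hJ hconv hU (hns.comp hψ.tendsto_atTop) hw'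
  obtain rfl := hstrict.eq_of_isMinOn hw'min hw hw'U hwU
  exact ⟨ψ, hw' v⟩

end IsRitzSequence

end Ritz

/-- Strictly convex case of Theorem 1 of the paper: if in addition `J` is strictly
convex on `Ů = ker Γ`, then the minimizers `ū` on `Ů` and `u⁽ᴺ⁾` on
`span{φ₁,…,φ_N} ∩ Ů` are unique, the whole sequence `u⁽ᴺ⁾` converges weakly to `ū`,
and `J (u⁽ᴺ⁾) → J ū`. -/
theorem stmt4 {H : Type*} [NormedAddCommGroup H] [InnerProductSpace ℝ H]
    [CompleteSpace H]
    (s : ℕ) (Γ : H →L[ℝ] EuclideanSpace ℝ (Fin s))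
    (φ : ℕ → H)
    (hcomplete : Dense (Submodule.span ℝ (φ '' {i | 1 ≤ i}) : Set H))
    (J : H → ℝ) (hcont : Continuous J)
    (hconv : ConvexOn ℝ Set.univ J)
    (U : Submodule ℝ H) (hUdef : U = LinearMap.ker (Γ : H →ₗ[ℝ] EuclideanSpace ℝ (Fin s)))
    (hstrict : ∀ u ∈ U, ∀ v ∈ U, u ≠ v → ∀ t : ℝ, 0 < t → t < 1 →
      J (t • u + (1 - t) • v) < t * J u + (1 - t) * J v)
    (UN : ℕ → Submodule ℝ H)
    (hUN : ∀ N, UN N = Submodule.span ℝ (φ '' Set.Icc 1 N) ⊓ U)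
    (hgrow : ∀ M : ℝ, ∃ R > (0:ℝ), ∀ u ∈ U, R ≤ ‖u‖ → M ≤ J u) :
    ∃ ub : H, (ub ∈ U ∧ ∀ u ∈ U, J ub ≤ J u) ∧
      (∀ w, (w ∈ U ∧ ∀ u ∈ U, J w ≤ J u) → w = ub) ∧
      ∃ uN : ℕ → H,
        (∀ N, (uN N ∈ UN N ∧ ∀ u ∈ UN N, J (uN N) ≤ J u) ∧
          (∀ w, (w ∈ UN N ∧ ∀ u ∈ UN N, J w ≤ J u) → w = uN N)) ∧
        (∀ v : H, Tendsto (fun N => (inner ℝ (uN N) v : ℝ)) atTop (𝓝 (inner ℝ ub v : ℝ))) ∧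
        Tendsto (fun N => J (uN N)) atTop (𝓝 (J ub)) := by
  obtain rfl : UN = fun N => Submodule.span ℝ (φ '' Icc 1 N) ⊓ U := funext hUN
  have hUclosed : IsClosed (U : Set H) := hUdef ▸ Γ.isClosed_ker
  have hJU : StrictConvexOn ℝ U J := ⟨U.convex, fun u hu v hv huv a b ha hb hab => by
    obtain rfl := eq_sub_of_add_eq' hab
    simpa using hstrict u hu v hv huv a ha (by linarith)⟩
  have hspan : Monotone fun N => Submodule.span ℝ (φ '' Icc 1 N) := fun M N hMN =>
    Submodule.span_mono (image_mono (Icc_subset_Icc_right hMN))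
  have hdense : (U : Set H) ⊆ closure (⋃ N, (Submodule.span ℝ (φ '' Icc 1 N) ⊓ U : Set H)) := by
    subst hUdef
    refine Submodule.ker_subset_closure_iUnion_inf_ker hspan.directed_le ?_ Γ
    rwa [← Submodule.span_iUnion, ← image_iUnion, iUnion_Icc_right]
  have : TopologicalSpace.SeparableSpace H :=
    .of_dense_span ((countable_range φ).mono (image_subset_range _ _)) hcomplete
  have (N : ℕ) : FiniteDimensional ℝ (Submodule.span ℝ (φ '' Icc 1 N) ⊓ U : Submodule ℝ H) :=
    have := FiniteDimensional.span_of_finite ℝ ((finite_Icc 1 N).image φ)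
    Submodule.finiteDimensional_inf_left _ _
  obtain ⟨R, -, hR⟩ := hgrow (J 0 + 1)
  replace hR : ∀ x ∈ U, R ≤ ‖x‖ → J 0 < J x := fun x hx hRx => by linarith [hR x hx hRx]
  choose uN huN huNmin using fun N => Submodule.exists_isMinOn_of_finiteDimensional hcont
    (Submodule.span ℝ (φ '' Icc 1 N) ⊓ U) fun x hx hRx => (hR x hx.2 hRx).le
  have hritz : IsRitzSequence J U _ uN :=
    ⟨fun M N hMN => inf_le_inf_right U (hspan hMN), fun N => inf_le_right, hdense, huN, huNmin⟩
  obtain ⟨ub, ψ, hψ, hub⟩ := exists_weakTendsto_subseq (hritz.norm_le hR)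
  obtain ⟨hubU, hubmin⟩ := hritz.isMinOn_of_weakTendsto hcont hconv hUclosed hψ.tendsto_atTop hub
  refine ⟨ub, ⟨hubU, hubmin⟩, fun w hw => hJU.eq_of_isMinOn hw.2 hubmin hw.1 hubU, uN,
    fun N => ⟨⟨huN N, huNmin N⟩, fun w hw => ?_⟩,
    hritz.weakTendsto hcont hconv hUclosed hJU (hritz.norm_le hR) hubU hubmin,
    hritz.tendsto_apply hcont hubU hubmin⟩
  exact (hJU.subset (hritz.le N) (Submodule.convex _)).eq_of_isMinOn hw.2 (huNmin N) hw.1 (huN N)
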